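/- arXiv:1605.03471 — 3 statements merged into one kernel-verified Lean document; each statement's English description precedes it below -/
import Mathlib

section
/- The function b ↦ Ψ(b,θ) has a unique minimizer over ℝ if and only if τ ∉ {Σ_{j=1}^{k} θ_j : k = 1, …, J−1}, i.e. if and only if τ is not equal to any of the partial sums θ_1, θ_1+θ_2, …, θ_1+⋯+θ_{J−1}. -/
noncomputable def rho (τ e : ℝ) : ℝ :=
  |e| * ((1 - τ) * (if e < 0 then 1 else 0) + τ * (if 0 ≤ e then 1 else 0))

noncomputable def Psi (τ : ℝ) {J : ℕ} (s θ : Fin J → ℝ) (b : ℝ) : ℝ :=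
  ∑ j, θ j * rho τ (s j - b)

/-!
`Ψ(·, θ)` is convex and piecewise linear with kinks at the `s_j`; for `b ≥ c` it rises at least
like `(Σ_{s_j ≤ c} θ_j − τ)(b − c)`, and for `b ≤ c` at least like `(τ − Σ_{s_j < c} θ_j)(c − b)`.
Hence `s_m` is a minimizer as soon as `Σ_{j<m} θ_j ≤ τ ≤ Σ_{j≤m} θ_j`, and the only one when both
inequalities are strict. If `τ = Σ_{j≤k} θ_j` with `k + 1 < J`, then both `s_k` and `s_{k+1}` are
minimizers; otherwise the partial sums, which run from `0` to `1`, jump over `τ` at some `m`.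
-/

open Finset

lemma rho_eq_mul_add_max (τ e : ℝ) : rho τ e = τ * e + max (-e) 0 := by
  unfold rho
  rcases lt_or_ge e 0 with h | h
  · rw [if_pos h, if_neg (not_le.2 h), abs_of_neg h, max_eq_left (neg_nonneg.2 h.le)]
    ring
  · rw [if_neg (not_lt.2 h), if_pos h, abs_of_nonneg h, max_eq_right (neg_nonpos.2 h)]
    ring

lemma Psi_sub_Psi (τ : ℝ) {J : ℕ} (s θ : Fin J → ℝ) (hθsum : ∑ j, θ j = 1) (b c : ℝ) :
    Psi τ s θ b - Psi τ s θ c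
      = τ * (c - b) + ∑ j, θ j * (max (b - s j) 0 - max (c - s j) 0) := by
  simp only [Psi, rho_eq_mul_add_max, neg_sub, ← sum_sub_distrib]
  calc _ = ∑ j, (θ j * (τ * (c - b)) + θ j * (max (b - s j) 0 - max (c - s j) 0)) :=
        sum_congr rfl fun j _ => by ring
    _ = _ := by rw [sum_add_distrib, ← sum_mul, hθsum, one_mul]

lemma ite_le_max_sub_max {b c x : ℝ} (hcb : c ≤ b) :
    (if x ≤ c then b - c else 0) ≤ max (b - x) 0 - max (c - x) 0 := by
  split_ifs <;> simp only [max_def] <;> split_ifs <;> linarith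

lemma max_sub_max_le_ite {b c x : ℝ} (hbc : b ≤ c) :
    max (c - x) 0 - max (b - x) 0 ≤ if x < c then c - b else 0 := by
  split_ifs <;> simp only [max_def] <;> split_ifs <;> linarith

section Subgradient

variable (τ : ℝ) {J : ℕ} (s θ : Fin J → ℝ)

lemma sum_filter_le_sub_mul_le_Psi_sub_Psi (hθ : ∀ j, 0 ≤ θ j) (hθsum : ∑ j, θ j = 1)
    {b c : ℝ} (hcb : c ≤ b) :
    (∑ j with s j ≤ c, θ j - τ) * (b - c) ≤ Psi τ s θ b - Psi τ s θ c := by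
  have hsum : (∑ j with s j ≤ c, θ j) * (b - c) = ∑ j, θ j * if s j ≤ c then b - c else 0 := by
    simp only [sum_mul, sum_filter, ite_mul, zero_mul, mul_ite, mul_zero]
  have := sum_le_sum fun j (_ : j ∈ univ) =>
    mul_le_mul_of_nonneg_left (ite_le_max_sub_max (x := s j) hcb) (hθ j)
  linear_combination hsum + this - Psi_sub_Psi τ s θ hθsum b c

lemma sub_sum_filter_lt_mul_le_Psi_sub_Psi (hθ : ∀ j, 0 ≤ θ j) (hθsum : ∑ j, θ j = 1)
    {b c : ℝ} (hbc : b ≤ c) :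
    (τ - ∑ j with s j < c, θ j) * (c - b) ≤ Psi τ s θ b - Psi τ s θ c := by
  have hsum : (∑ j with s j < c, θ j) * (c - b) = ∑ j, θ j * if s j < c then c - b else 0 := by
    simp only [sum_mul, sum_filter, ite_mul, zero_mul, mul_ite, mul_zero]
  have := sum_le_sum fun j (_ : j ∈ univ) =>
    mul_le_mul_of_nonneg_left (max_sub_max_le_ite (x := s j) hbc) (hθ j)
  linear_combination -hsum + this + Psi_sub_Psi τ s θ hθsum c b

variable {s}

lemma Psi_le_Psi_of_mem_Icc (hs : StrictMono s) (hθ : ∀ j, 0 ≤ θ j)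
    (hθsum : ∑ j, θ j = 1) (m : Fin J)
    (hm : τ ∈ Set.Icc (∑ j ∈ Iio m, θ j) (∑ j ∈ Iic m, θ j)) (b : ℝ) :
    Psi τ s θ (s m) ≤ Psi τ s θ b := by
  rcases le_total (s m) b with h | h
  · have := sum_filter_le_sub_mul_le_Psi_sub_Psi τ s θ hθ hθsum h
    simp only [hs.le_iff_le, filter_ge_eq_Iic] at this
    nlinarith [mul_nonneg (sub_nonneg.2 hm.2) (sub_nonneg.2 h)]
  · have := sub_sum_filter_lt_mul_le_Psi_sub_Psi τ s θ hθ hθsum h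
    simp only [hs.lt_iff_lt, filter_gt_eq_Iio] at this
    nlinarith [mul_nonneg (sub_nonneg.2 hm.1) (sub_nonneg.2 h)]

lemma eq_of_Psi_le_Psi_of_mem_Ioo (hs : StrictMono s) (hθ : ∀ j, 0 ≤ θ j)
    (hθsum : ∑ j, θ j = 1) (m : Fin J)
    (hm : τ ∈ Set.Ioo (∑ j ∈ Iio m, θ j) (∑ j ∈ Iic m, θ j)) {b : ℝ}
    (hb : Psi τ s θ b ≤ Psi τ s θ (s m)) : b = s m := by
  by_contra hne
  rcases lt_or_gt_of_ne hne with h | h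
  · have := sub_sum_filter_lt_mul_le_Psi_sub_Psi τ s θ hθ hθsum h.le
    simp only [hs.lt_iff_lt, filter_gt_eq_Iio] at this
    nlinarith [mul_pos (sub_pos.2 hm.1) (sub_pos.2 h)]
  · have := sum_filter_le_sub_mul_le_Psi_sub_Psi τ s θ hθ hθsum h.le
    simp only [hs.le_iff_le, filter_ge_eq_Iic] at this
    nlinarith [mul_pos (sub_pos.2 hm.2) (sub_pos.2 h)]

end Subgradient

lemma Nat.exists_lt_and_lt_succ_of_ne {α : Type*} [LinearOrder α] {G : ℕ → α} {a : α} {N : ℕ}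
    (h0 : G 0 < a) (hN : a < G N) (hne : ∀ n, 0 < n → n < N → G n ≠ a) :
    ∃ n < N, G n < a ∧ a < G (n + 1) := by
  induction N with
  | zero => exact absurd (h0.trans hN) (lt_irrefl _)
  | succ N ih =>
    rcases lt_or_ge (G N) a with hlt | hge
    · exact ⟨N, N.lt_succ_self, hlt, hN⟩
    · have hN0 : 0 < N := Nat.pos_of_ne_zero fun h => (h ▸ h0).not_ge hge
      obtain ⟨n, hn, hn'⟩ := ih ((hne N hN0 N.lt_succ_self).symm.lt_of_le hge)
        fun n h0 h => hne n h0 (h.trans N.lt_succ_self)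
      exact ⟨n, hn.trans N.lt_succ_self, hn'⟩

lemma Fin.exists_mem_Ioo_sum_Iio_sum_Iic {M : Type*} [AddCommMonoid M] [LinearOrder M] {J : ℕ}
    (θ : Fin J → M) {a : M} (ha : a ∈ Set.Ioo 0 (∑ j, θ j))
    (hne : ∀ k : Fin J, (k : ℕ) + 1 < J → a ≠ ∑ j ∈ Iic k, θ j) :
    ∃ m : Fin J, a ∈ Set.Ioo (∑ j ∈ Iio m, θ j) (∑ j ∈ Iic m, θ j) := by
  set G : ℕ → M := fun n => ∑ j ∈ univ.filter fun j : Fin J => (j : ℕ) < n, θ j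
  have hIio (m : Fin J) : ∑ j ∈ Iio m, θ j = G m := by
    refine sum_congr ?_ fun _ _ => rfl; ext j; simp
  have hIic (m : Fin J) : ∑ j ∈ Iic m, θ j = G (m + 1) := by
    refine sum_congr ?_ fun _ _ => rfl; ext j
    simp only [mem_Iic, mem_filter, mem_univ, true_and, Fin.le_def]; omega
  obtain ⟨n, hn, hn'⟩ := Nat.exists_lt_and_lt_succ_of_ne (G := G) (N := J)
    (by simpa [G] using ha.1) (by simpa [G] using ha.2) fun n hn0 hnJ => by
      obtain ⟨k, rfl⟩ := Nat.exists_eq_add_one_of_ne_zero hn0.ne'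
      simpa [hIic] using (hne ⟨k, by omega⟩ hnJ).symm
  exact ⟨⟨n, hn⟩, by rwa [hIio, hIic]⟩

theorem stmt_3_general (τ : ℝ) (hτ : τ ∈ Set.Ioo (0 : ℝ) 1) {J : ℕ}
    (s : Fin J → ℝ) (hs : StrictMono s)
    (θ : Fin J → ℝ) (hθpos : ∀ j, 0 < θ j) (hθsum : ∑ j, θ j = 1) :
    (∃! β : ℝ, ∀ b : ℝ, Psi τ s θ β ≤ Psi τ s θ b) ↔
      ∀ k : Fin J, (k : ℕ) + 1 < J → τ ≠ ∑ j ∈ Finset.Iic k, θ j := by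
  have hθ : ∀ j, 0 ≤ θ j := fun j => (hθpos j).le
  constructor
  · rintro ⟨β, -, hβ⟩ k hk hτk
    set k' : Fin J := ⟨k + 1, hk⟩
    have hkk' : k < k' := Fin.lt_def.2 k.val.lt_succ_self
    have hIio : Iio k' = Iic k := by
      ext j; simp only [mem_Iio, mem_Iic, Fin.lt_def, Fin.le_def, k']; omega
    have hk_min := Psi_le_Psi_of_mem_Icc τ θ hs hθ hθsum k
      ⟨hτk ▸ sum_le_sum_of_subset_of_nonneg Iio_subset_Iic_self fun j _ _ => hθ j, hτk.le⟩
    have hk'_min := Psi_le_Psi_of_mem_Icc τ θ hs hθ hθsum k'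
      ⟨hIio ▸ hτk.ge,
        hτk ▸ sum_le_sum_of_subset_of_nonneg (Iic_subset_Iic.2 hkk'.le) fun j _ _ => hθ j⟩
    exact (hs hkk').ne ((hβ _ hk_min).trans (hβ _ hk'_min).symm)
  · intro hne
    obtain ⟨m, hm⟩ := Fin.exists_mem_Ioo_sum_Iio_sum_Iic θ (hθsum ▸ hτ) hne
    exact ⟨s m, Psi_le_Psi_of_mem_Icc τ θ hs hθ hθsum m (Set.Ioo_subset_Icc_self hm),
      fun b hb => eq_of_Psi_le_Psi_of_mem_Ioo τ θ hs hθ hθsum m hm (hb (s m))⟩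

/-- b ↦ Ψ(b,θ) has a unique minimizer over ℝ iff τ is not equal to any of the
partial sums θ_1, θ_1+θ_2, …, θ_1+⋯+θ_{J−1}. -/
theorem stmt_3 (τ : ℝ) (hτ : τ ∈ Set.Ioo (0 : ℝ) 1) {J : ℕ} (hJ : 2 ≤ J)
    (s : Fin J → ℝ) (hs : StrictMono s)
    (θ : Fin J → ℝ) (hθpos : ∀ j, 0 < θ j) (hθsum : ∑ j, θ j = 1) :
    (∃! β : ℝ, ∀ b : ℝ, Psi τ s θ β ≤ Psi τ s θ b) ↔
      ∀ k : Fin J, (k : ℕ) + 1 < J → τ ≠ ∑ j ∈ Finset.Iic k, θ j :=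
  stmt_3_general τ hτ s hs θ hθpos hθsum
end

section
/- Suppose β* ∈ ℝ is the unique minimizer of b ↦ Ψ(b,θ*) for a probability vector θ* with strictly positive entries. Then there exists δ > 0 such that for every probability vector θ with strictly positive entries satisfying max_{1≤j≤J} |θ_j − θ*_j| < δ, β* is again the unique minimizer over ℝ of b ↦ Ψ(b,θ); in particular the map sending θ to the minimizer of Ψ(·,θ) is constant on a neighborhood of θ*. -/
/-!
`Ψ(·, θ)` is convex and piecewise linear with knots at the `s j`, so a point is its strict
minimiser exactly when its left derivative there is negative and its right derivative positive.
Both one-sided derivatives at `β*` are linear in `θ`, hence these two strict inequalities, which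
hold at `θ*`, persist on a neighbourhood of `θ*`.
-/

open Set Filter Topology

theorem ConvexOn.lt_of_eventually_lt {E β : Type*} [AddCommGroup E] [TopologicalSpace E]
    [Module ℝ E] [IsTopologicalAddGroup E] [ContinuousSMul ℝ E] [AddCommMonoid β] [LinearOrder β]
    [IsOrderedCancelAddMonoid β] [Module ℝ β] [PosSMulStrictMono ℝ β] {s : Set E} {f : E → β}
    {x y : E} (hf : ConvexOn ℝ s f) (hx : x ∈ s) (hy : y ∈ s) (hyx : y ≠ x)
    (hloc : ∀ᶠ z in 𝓝[≠] x, f x < f z) : f x < f y := by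
  have hline : Tendsto (AffineMap.lineMap x y) (𝓝[>] (0 : ℝ)) (𝓝[≠] x) := by
    refine tendsto_nhdsWithin_of_tendsto_nhds_of_eventually_within _ ?_ ?_
    · simpa using (AffineMap.lineMap_continuous (p := x) (q := y)).continuousWithinAt
        (s := Ioi (0 : ℝ)) (x := 0) |>.tendsto
    · filter_upwards [self_mem_nhdsWithin] with t ht
      simp [AffineMap.lineMap_eq_left_iff, (mem_Ioi.mp ht).ne', hyx.symm]
  obtain ⟨t, hft, ht⟩ := ((hline.eventually hloc).and (Ioo_mem_nhdsGT zero_lt_one)).exists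
  exact hft.trans (hf.lt_right_of_left_lt hx hy
    (openSegment_eq_image_lineMap ℝ x y ▸ mem_image_of_mem _ ht) hft)

theorem exists_pos_forall_mem_ball_eq {X ι : Type*} [MetricSpace X] [Finite ι] (s : ι → X)
    (x : X) : ∃ ε > 0, ∀ i, s i ∈ Metric.ball x ε → s i = x := by
  have hopen : IsOpen (range s \ {x})ᶜ := ((finite_range s).sdiff).isClosed.isOpen_compl
  obtain ⟨ε, hε, hball⟩ := Metric.isOpen_iff.mp hopen x (by simp)
  exact ⟨ε, hε, fun i hi => by_contra fun hne => hball hi ⟨mem_range_self i, hne⟩⟩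

theorem exists_pos_forall_notMem_Ioo {ι : Type*} [Finite ι] (s : ι → ℝ) (b : ℝ) :
    ∃ ε > 0, ∀ t ≤ ε, ∀ i, s i ∉ Ioo (b - t) b ∧ s i ∉ Ioo b (b + t) := by
  obtain ⟨ε, hε, hball⟩ := exists_pos_forall_mem_ball_eq s b
  have hmem : ∀ t ≤ ε, ∀ i, s i ∈ Ioo (b - t) (b + t) → s i = b := fun t ht i hi =>
    hball i (Real.ball_eq_Ioo b ε ▸ Ioo_subset_Ioo (by linarith) (by linarith) hi)
  refine ⟨ε, hε, fun t ht i => ⟨fun hi => ?_, fun hi => ?_⟩⟩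
  · exact hi.2.ne (hmem t ht i ⟨hi.1, by linarith [hi.1, hi.2]⟩)
  · exact hi.1.ne' (hmem t ht i ⟨by linarith [hi.1, hi.2], hi.2⟩)

lemma rho_of_nonneg {τ e : ℝ} (he : 0 ≤ e) : rho τ e = τ * e := by
  rw [rho, if_neg he.not_gt, if_pos he, abs_of_nonneg he]; ring

lemma rho_of_nonpos {τ e : ℝ} (he : e ≤ 0) : rho τ e = (τ - 1) * e := by
  rcases he.lt_or_eq with he | rfl
  · rw [rho, if_pos he, if_neg he.not_ge, abs_of_neg he]; ring
  · simp [rho]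

lemma rho_eq_max (τ e : ℝ) : rho τ e = max (τ * e) ((τ - 1) * e) := by
  rcases le_total 0 e with he | he
  · rw [rho_of_nonneg he, max_eq_left (by linarith)]
  · rw [rho_of_nonpos he, max_eq_right (by linarith)]

lemma convexOn_rho (τ : ℝ) : ConvexOn ℝ univ (rho τ) := by
  have h : rho τ = (LinearMap.mulLeft ℝ τ : ℝ → ℝ) ⊔ (LinearMap.mulLeft ℝ (τ - 1) : ℝ → ℝ) := by
    ext e; exact rho_eq_max τ e
  rw [h]
  exact ((LinearMap.mulLeft ℝ τ).convexOn convex_univ).sup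
    ((LinearMap.mulLeft ℝ (τ - 1)).convexOn convex_univ)

section Psi

variable {τ : ℝ} {J : ℕ} {s θ : Fin J → ℝ}

lemma convexOn_Psi (hθ : ∀ j, 0 ≤ θ j) : ConvexOn ℝ univ (Psi τ s θ) := by
  refine ⟨convex_univ, fun x _ y _ a b ha hb hab => ?_⟩
  simp only [Psi, smul_eq_mul, Finset.mul_sum, ← Finset.sum_add_distrib]
  refine Finset.sum_le_sum fun j _ => ?_
  have hcomb : s j - (a * x + b * y) = a * (s j - x) + b * (s j - y) := by
    linear_combination (s j) * hab.symm
  have hρ := (convexOn_rho τ).2 (mem_univ (s j - x)) (mem_univ (s j - y)) ha hb hab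
  simp only [smul_eq_mul] at hρ
  rw [hcomb]
  nlinarith [mul_le_mul_of_nonneg_left hρ (hθ j)]

noncomputable def PsiLeftDeriv (τ : ℝ) {J : ℕ} (s θ : Fin J → ℝ) (b : ℝ) : ℝ :=
  ∑ j, θ j * if s j < b then 1 - τ else -τ

noncomputable def PsiRightDeriv (τ : ℝ) {J : ℕ} (s θ : Fin J → ℝ) (b : ℝ) : ℝ :=
  ∑ j, θ j * if s j ≤ b then 1 - τ else -τ

lemma Psi_sub_eq {b t : ℝ} (ht : 0 ≤ t) (hknot : ∀ j, s j ∉ Ioo (b - t) b) :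
    Psi τ s θ (b - t) = Psi τ s θ b - t * PsiLeftDeriv τ s θ b := by
  simp only [Psi, PsiLeftDeriv, Finset.mul_sum, ← Finset.sum_sub_distrib]
  refine Finset.sum_congr rfl fun j _ => ?_
  split_ifs with hj
  · have : s j ≤ b - t := not_lt.mp fun h => hknot j ⟨h, hj⟩
    rw [rho_of_nonpos (by linarith), rho_of_nonpos (by linarith)]; ring
  · rw [rho_of_nonneg (by linarith), rho_of_nonneg (by linarith)]; ring

lemma Psi_add_eq {b t : ℝ} (ht : 0 ≤ t) (hknot : ∀ j, s j ∉ Ioo b (b + t)) :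
    Psi τ s θ (b + t) = Psi τ s θ b + t * PsiRightDeriv τ s θ b := by
  simp only [Psi, PsiRightDeriv, Finset.mul_sum, ← Finset.sum_add_distrib]
  refine Finset.sum_congr rfl fun j _ => ?_
  split_ifs with hj
  · rw [rho_of_nonpos (by linarith), rho_of_nonpos (by linarith)]; ring
  · have : b + t ≤ s j := not_lt.mp fun h => hknot j ⟨not_le.mp hj, h⟩
    rw [rho_of_nonneg (by linarith), rho_of_nonneg (by linarith)]; ring

lemma PsiLeftDeriv_neg_and_PsiRightDeriv_pos_of_forall_lt {b : ℝ}
    (hmin : ∀ c, c ≠ b → Psi τ s θ b < Psi τ s θ c) :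
    PsiLeftDeriv τ s θ b < 0 ∧ 0 < PsiRightDeriv τ s θ b := by
  obtain ⟨ε, hε, hknot⟩ := exists_pos_forall_notMem_Ioo s b
  have hleft := hmin (b - ε) (by linarith)
  have hright := hmin (b + ε) (by linarith)
  rw [Psi_sub_eq hε.le fun j => (hknot ε le_rfl j).1] at hleft
  rw [Psi_add_eq hε.le fun j => (hknot ε le_rfl j).2] at hright
  constructor <;> nlinarith

lemma Psi_lt_of_PsiLeftDeriv_neg_of_PsiRightDeriv_pos (hθ : ∀ j, 0 ≤ θ j) {b : ℝ}
    (hL : PsiLeftDeriv τ s θ b < 0) (hR : 0 < PsiRightDeriv τ s θ b) {c : ℝ} (hcb : c ≠ b) :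
    Psi τ s θ b < Psi τ s θ c := by
  obtain ⟨ε, hε, hknot⟩ := exists_pos_forall_notMem_Ioo s b
  refine (convexOn_Psi hθ).lt_of_eventually_lt (mem_univ b) (mem_univ c) hcb ?_
  filter_upwards [nhdsWithin_le_nhds (Ioo_mem_nhds (by linarith : b - ε < b)
    (by linarith : b < b + ε)), self_mem_nhdsWithin] with z ⟨hz₁, hz₂⟩ hzb
  rcases lt_or_gt_of_ne hzb with hz | hz
  · rw [← sub_sub_cancel b z, Psi_sub_eq (by linarith) fun j => (hknot _ (by linarith) j).1]
    linarith [mul_neg_of_pos_of_neg (sub_pos.2 hz) hL]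
  · rw [← add_sub_cancel b z, Psi_add_eq (by linarith) fun j => (hknot _ (by linarith) j).2]
    linarith [mul_pos (sub_pos.2 hz) hR]

end Psi

theorem stmt_6_general (τ : ℝ) {J : ℕ}
    (s : Fin J → ℝ)
    (θstar : Fin J → ℝ)
    (βstar : ℝ)
    (huniq : ∀ b : ℝ, b ≠ βstar → Psi τ s θstar βstar < Psi τ s θstar b) :
    ∃ δ > (0 : ℝ), ∀ θ : Fin J → ℝ, (∀ j, 0 < θ j) → (∑ j, θ j = 1) →
      (∀ j, |θ j - θstar j| < δ) →
      ∀ b : ℝ, b ≠ βstar → Psi τ s θ βstar < Psi τ s θ b := by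
  obtain ⟨hL, hR⟩ := PsiLeftDeriv_neg_and_PsiRightDeriv_pos_of_forall_lt huniq
  have hLcont : Continuous fun θ => PsiLeftDeriv τ s θ βstar := by unfold PsiLeftDeriv; fun_prop
  have hRcont : Continuous fun θ => PsiRightDeriv τ s θ βstar := by unfold PsiRightDeriv; fun_prop
  have hnear : ∀ᶠ θ in 𝓝 θstar, PsiLeftDeriv τ s θ βstar < 0 ∧ 0 < PsiRightDeriv τ s θ βstar :=
    (hLcont.tendsto θstar |>.eventually (eventually_lt_nhds hL)).and
      (hRcont.tendsto θstar |>.eventually (eventually_gt_nhds hR))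
  obtain ⟨δ, hδ, hball⟩ := Metric.eventually_nhds_iff.mp hnear
  refine ⟨δ, hδ, fun θ hθ _ hclose b hb => ?_⟩
  obtain ⟨hL', hR'⟩ :=
    hball ((dist_pi_lt_iff hδ).mpr fun j => (Real.dist_eq _ _).trans_lt (hclose j))
  exact Psi_lt_of_PsiLeftDeriv_neg_of_PsiRightDeriv_pos (fun j => (hθ j).le) hL' hR' hb

/-- If β* is the unique minimizer of b ↦ Ψ(b,θ*), then there is δ > 0 such that
for every probability vector θ with positive entries and max_j |θ_j − θ*_j| < δ,
β* is again the unique minimizer of b ↦ Ψ(b,θ). -/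
theorem stmt_6 (τ : ℝ) (hτ : τ ∈ Set.Ioo (0 : ℝ) 1) {J : ℕ} (hJ : 2 ≤ J)
    (s : Fin J → ℝ) (hs : StrictMono s)
    (θstar : Fin J → ℝ) (hθpos : ∀ j, 0 < θstar j) (hθsum : ∑ j, θstar j = 1)
    (βstar : ℝ)
    (huniq : ∀ b : ℝ, b ≠ βstar → Psi τ s θstar βstar < Psi τ s θstar b) :
    ∃ δ > (0 : ℝ), ∀ θ : Fin J → ℝ, (∀ j, 0 < θ j) → (∑ j, θ j = 1) →
      (∀ j, |θ j - θstar j| < δ) →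
      ∀ b : ℝ, b ≠ βstar → Psi τ s θ βstar < Psi τ s θ b :=
  stmt_6_general τ s θstar βstar huniq
end

section
/- For fixed a, b > 0 and fixed τ ∈ (0,1), lim_{ε→0+} aε · B(τ; aε, bε) = 1, where B(τ;α,β) = ∫_0^τ x^{α−1}(1−x)^{β−1} dx. -/
/-- The incomplete beta function B(x;α,β) = ∫_0^x t^{α−1}(1−t)^{β−1} dt. -/
noncomputable def incBeta (x a b : ℝ) : ℝ :=
  ∫ t in (0 : ℝ)..x, t ^ (a - 1) * (1 - t) ^ (b - 1)

/-- The beta function B(α,β) = Γ(α)Γ(β)/Γ(α+β). -/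
noncomputable def betaFn (a b : ℝ) : ℝ :=
  Real.Gamma a * Real.Gamma b / Real.Gamma (a + b)

/-- The regularized incomplete beta function I_x(α,β) = B(x;α,β)/B(α,β). -/
noncomputable def Ireg (x a b : ℝ) : ℝ := incBeta x a b / betaFn a b

/-!
For `0 ≤ β ≤ 1` and `0 < t ≤ τ < 1` the factor `(1 - t) ^ (β - 1)` lies between `1` and
`(1 - t)⁻¹ = 1 + t / (1 - t)`, so `α * B(τ; α, β)` is squeezed between `τ ^ α` and
`τ ^ α + α τ / (1 - τ)`, and both bounds tend to `1` as `α → 0⁺`.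
-/

open Real Filter Topology intervalIntegral

lemma intervalIntegrable_rpow_mul_one_sub_rpow {α τ : ℝ} (hα : 0 < α) (hτ : τ < 1) (β : ℝ) :
    IntervalIntegrable (fun t : ℝ => t ^ (α - 1) * (1 - t) ^ (β - 1)) MeasureTheory.volume 0 τ :=
  (intervalIntegrable_rpow' (by linarith)).mul_continuousOn <|
    ContinuousOn.rpow_const (by fun_prop) fun t ht =>
      Or.inl (sub_pos.2 (ht.2.trans_lt (sup_lt_iff.2 ⟨one_pos, hτ⟩))).ne'

lemma integral_rpow_sub_one {α : ℝ} (hα : 0 < α) (τ : ℝ) :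
    ∫ t in (0 : ℝ)..τ, t ^ (α - 1) = τ ^ α / α := by
  rw [integral_rpow (Or.inl (by linarith)), sub_add_cancel, zero_rpow hα.ne', sub_zero]

lemma rpow_le_rpow_mul_one_sub_rpow {β t : ℝ} (γ : ℝ) (hβ : β ≤ 1) (ht0 : 0 ≤ t) (ht1 : t < 1) :
    t ^ γ ≤ t ^ γ * (1 - t) ^ (β - 1) :=
  le_mul_of_one_le_right (rpow_nonneg ht0 _)
    (one_le_rpow_of_pos_of_le_one_of_nonpos (by linarith) (by linarith) (by linarith))

lemma rpow_sub_one_mul_one_sub_rpow_le {α β t τ : ℝ} (hα : 0 ≤ α) (hβ : 0 ≤ β) (ht0 : 0 < t)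
    (htτ : t ≤ τ) (hτ : τ < 1) :
    t ^ (α - 1) * (1 - t) ^ (β - 1) ≤ t ^ (α - 1) + (1 - τ)⁻¹ := by
  have h1t : 0 < 1 - t := by linarith
  calc t ^ (α - 1) * (1 - t) ^ (β - 1) ≤ t ^ (α - 1) * (1 - t) ^ (-1 : ℝ) :=
        mul_le_mul_of_nonneg_left (rpow_le_rpow_of_exponent_ge h1t (by linarith) (by linarith))
          (rpow_nonneg ht0.le _)
    _ = t ^ (α - 1) + t ^ α / (1 - t) := by
        rw [rpow_neg_one, rpow_sub_one ht0.ne']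
        field_simp
        ring
    _ ≤ t ^ (α - 1) + (1 - τ)⁻¹ := by
        rw [inv_eq_one_div]
        gcongr
        exact rpow_le_one ht0.le (by linarith) hα

lemma rpow_le_mul_incBeta {α β τ : ℝ} (hα : 0 < α) (hβ : β ≤ 1) (hτ0 : 0 ≤ τ) (hτ1 : τ < 1) :
    τ ^ α ≤ α * incBeta τ α β := by
  have h : ∫ t in (0 : ℝ)..τ, t ^ (α - 1) ≤ incBeta τ α β :=
    integral_mono_on hτ0 (intervalIntegrable_rpow' (by linarith))
      (intervalIntegrable_rpow_mul_one_sub_rpow hα hτ1 β) fun t ht =>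
        rpow_le_rpow_mul_one_sub_rpow _ hβ ht.1 (ht.2.trans_lt hτ1)
  rwa [integral_rpow_sub_one hα, div_le_iff₀' hα] at h

lemma mul_incBeta_le {α β τ : ℝ} (hα : 0 < α) (hβ : 0 ≤ β) (hτ0 : 0 ≤ τ) (hτ1 : τ < 1) :
    α * incBeta τ α β ≤ τ ^ α + α * (τ / (1 - τ)) := by
  have h : incBeta τ α β ≤ ∫ t in (0 : ℝ)..τ, (t ^ (α - 1) + (1 - τ)⁻¹) :=
    integral_mono_on_of_le_Ioo hτ0 (intervalIntegrable_rpow_mul_one_sub_rpow hα hτ1 β)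
      ((intervalIntegrable_rpow' (by linarith)).add intervalIntegrable_const) fun t ht =>
        rpow_sub_one_mul_one_sub_rpow_le hα.le hβ ht.1 ht.2.le hτ1
  rw [integral_add (intervalIntegrable_rpow' (by linarith)) intervalIntegrable_const,
    integral_rpow_sub_one hα, integral_const, sub_zero, smul_eq_mul] at h
  calc α * incBeta τ α β ≤ α * (τ ^ α / α + τ * (1 - τ)⁻¹) := by gcongr
    _ = τ ^ α + α * (τ / (1 - τ)) := by field_simp

theorem tendsto_mul_incBeta {τ : ℝ} (hτ0 : 0 < τ) (hτ1 : τ < 1) :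
    Tendsto (fun p : ℝ × ℝ => p.1 * incBeta τ p.1 p.2) (𝓝[>] 0 ×ˢ 𝓝[>] 0) (𝓝 1) := by
  have hfst : Tendsto Prod.fst (𝓝[>] (0 : ℝ) ×ˢ 𝓝[>] (0 : ℝ)) (𝓝 0) :=
    tendsto_fst.mono_right nhdsWithin_le_nhds
  have hlower : Tendsto (fun p : ℝ × ℝ => τ ^ p.1) (𝓝[>] 0 ×ˢ 𝓝[>] 0) (𝓝 1) := by
    simpa [Function.comp_def] using (continuousAt_const_rpow hτ0.ne').tendsto.comp hfst
  have hupper : Tendsto (fun p : ℝ × ℝ => τ ^ p.1 + p.1 * (τ / (1 - τ))) (𝓝[>] 0 ×ˢ 𝓝[>] 0)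
      (𝓝 1) := by
    simpa using hlower.add (hfst.mul_const (τ / (1 - τ)))
  have hsmall : ∀ᶠ p : ℝ × ℝ in 𝓝[>] 0 ×ˢ 𝓝[>] 0, 0 < p.1 ∧ 0 < p.2 ∧ p.2 ≤ 1 :=
    prod_mem_prod self_mem_nhdsWithin (Ioc_mem_nhdsGT one_pos)
  exact tendsto_of_tendsto_of_tendsto_of_le_of_le' hlower hupper
    (hsmall.mono fun p hp => rpow_le_mul_incBeta hp.1 hp.2.2 hτ0.le hτ1)
    (hsmall.mono fun p hp => mul_incBeta_le hp.1 hp.2.1.le hτ0.le hτ1)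

lemma tendsto_const_mul_nhdsGT_zero {c : ℝ} (hc : 0 < c) :
    Tendsto (fun ε : ℝ => c * ε) (𝓝[>] 0) (𝓝[>] 0) :=
  tendsto_nhdsWithin_iff.2
    ⟨((continuous_const_mul c).tendsto' 0 0 (mul_zero c)).mono_left nhdsWithin_le_nhds,
      eventually_mem_nhdsWithin.mono fun _ hε => mul_pos hc hε⟩

/-- For fixed a, b > 0 and τ ∈ (0,1), lim_{ε→0+} aε · B(τ; aε, bε) = 1. -/
theorem stmt_15 (a b : ℝ) (ha : 0 < a) (hb : 0 < b)
    (τ : ℝ) (hτ : τ ∈ Set.Ioo (0 : ℝ) 1) :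
    Filter.Tendsto (fun ε : ℝ => a * ε * incBeta τ (a * ε) (b * ε))
      (nhdsWithin 0 (Set.Ioi 0)) (nhds 1) :=
  (tendsto_mul_incBeta hτ.1 hτ.2).comp
    ((tendsto_const_mul_nhdsGT_zero ha).prodMk (tendsto_const_mul_nhdsGT_zero hb))
end
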